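/- arXiv:2508.18229 — 8 statements merged into one kernel-verified Lean document; each statement's English description precedes it below -/
import Mathlib

section
/- Let p and p* be real numbers. For every n ≥ 0 and every s ∈ ℂ, the polynomials q_n satisfy the functional equation q_n(s) = (−1)^n q_n(p* − p − s). -/
/-- `qpoly p ps n s` is `n!` times the `n`-th Taylor coefficient at `z = 0` of
`z ↦ (1 - z)^(p+s) * (1 + z)^(ps - s)` (principal branch powers). -/
noncomputable def qpoly (p ps : ℝ) (n : ℕ) (s : ℂ) : ℂ :=
  iteratedDeriv n (fun z : ℂ => (1 - z) ^ ((p : ℂ) + s) * (1 + z) ^ ((ps : ℂ) - s)) 0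

theorem qpoly_functional_equation (p ps : ℝ) (n : ℕ) (s : ℂ) :
    qpoly p ps n s = (-1) ^ n * qpoly p ps n ((ps : ℂ) - (p : ℂ) - s) := by
  unfold qpoly
  have h : (fun z : ℂ => (1 - z) ^ ((p : ℂ) + s) * (1 + z) ^ ((ps : ℂ) - s)) =
      fun z : ℂ => (1 - (-z)) ^ ((p : ℂ) + ((ps : ℂ) - (p : ℂ) - s)) *
        (1 + (-z)) ^ ((ps : ℂ) - ((ps : ℂ) - (p : ℂ) - s)) := by
    funext z
    ring_nf
  rw [h]
  simpa [smul_eq_mul] using iteratedDeriv_comp_neg n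
    (fun z : ℂ => (1 - z) ^ ((p : ℂ) + ((ps : ℂ) - (p : ℂ) - s)) *
      (1 + z) ^ ((ps : ℂ) - ((ps : ℂ) - (p : ℂ) - s))) 0
end

section
/- Let p and p* be real numbers. For every n ≥ 0 and every s ∈ ℂ, the polynomials q_n satisfy the recurrence 2·q_{n+1}(s) = (p* − p − 2s)·q_n(s) + (p* − s)·q_n(s+1) − (p + s)·q_n(s−1), with initial condition q_0(s) = 1. -/
open Complex Filter Topology

/-- The left side is `2 (d/dz) (u^a v^b)` for `u = 1 - z`, `v = 1 + z`. -/
lemma two_mul_cpow_mul_cpow_deriv_eq {u v : ℂ} (hu : u ≠ 0) (hv : v ≠ 0) (huv : u + v = 2)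
    (a b : ℂ) :
    2 * (b * u ^ a * v ^ (b - 1) - a * u ^ (a - 1) * v ^ b) =
      (b - a) * (u ^ a * v ^ b) + b * (u ^ (a + 1) * v ^ (b - 1))
        - a * (u ^ (a - 1) * v ^ (b + 1)) := by
  have hsucc : ∀ {w : ℂ}, w ≠ 0 → ∀ c : ℂ, w ^ (c + 1) = w ^ c * w := fun hw c => by
    rw [cpow_add _ _ hw, cpow_one]
  have hu' : u ^ a = u ^ (a - 1) * u := by rw [← hsucc hu, sub_add_cancel]
  have hv' : v ^ b = v ^ (b - 1) * v := by rw [← hsucc hv, sub_add_cancel]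
  rw [hsucc hu, hu', hsucc hv, hv']
  linear_combination (u ^ (a - 1) * v ^ (b - 1)) * (a * v - b * u) * huv

section

variable (p ps : ℝ)

/-- `qpoly p ps n s` is `n!` times the `n`-th Taylor coefficient at `z = 0` of
`z ↦ (1 - z)^(p+s) * (1 + z)^(ps - s)` (principal branch powers). -/
noncomputable def qpolyGen (s z : ℂ) : ℂ :=
  (1 - z) ^ ((p : ℂ) + s) * (1 + z) ^ ((ps : ℂ) - s)

lemma qpoly_eq_iteratedDeriv_qpolyGen (n : ℕ) (s : ℂ) :
    qpoly p ps n s = iteratedDeriv n (qpolyGen p ps s) 0 := rfl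

lemma analyticAt_qpolyGen (s : ℂ) : AnalyticAt ℂ (qpolyGen p ps s) 0 :=
  ((analyticAt_const.sub analyticAt_id).cpow analyticAt_const (by simp)).mul
    ((analyticAt_const.add analyticAt_id).cpow analyticAt_const (by simp))

lemma hasDerivAt_two_mul_qpolyGen (s : ℂ) {z : ℂ} (hz : ‖z‖ < 1) :
    HasDerivAt (fun w => 2 * qpolyGen p ps s w)
      (((ps : ℂ) - p - 2 * s) * qpolyGen p ps s z + ((ps : ℂ) - s) * qpolyGen p ps (s + 1) z
        - ((p : ℂ) + s) * qpolyGen p ps (s - 1) z) z := by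
  have h1 : 1 - z ∈ slitPlane := by
    simpa [sub_eq_add_neg] using mem_slitPlane_of_norm_lt_one (z := -z) (by simpa using hz)
  have h2 : 1 + z ∈ slitPlane := mem_slitPlane_of_norm_lt_one hz
  have hderiv := ((((hasDerivAt_id z).const_sub 1).cpow_const (c := (p : ℂ) + s) h1).mul
    (((hasDerivAt_id z).const_add 1).cpow_const (c := (ps : ℂ) - s) h2)).const_mul 2
  refine hderiv.congr_deriv ?_
  simp only [qpolyGen, id]
  linear_combination (norm := ring_nf)
    two_mul_cpow_mul_cpow_deriv_eq (slitPlane_ne_zero h1) (slitPlane_ne_zero h2) (by ring)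
      ((p : ℂ) + s) ((ps : ℂ) - s)

lemma two_mul_deriv_qpolyGen_eventuallyEq (s : ℂ) :
    (fun z => 2 * deriv (qpolyGen p ps s) z) =ᶠ[𝓝 0]
      fun z => ((ps : ℂ) - p - 2 * s) * qpolyGen p ps s z
        + ((ps : ℂ) - s) * qpolyGen p ps (s + 1) z - ((p : ℂ) + s) * qpolyGen p ps (s - 1) z := by
  filter_upwards [Metric.ball_mem_nhds (0 : ℂ) one_pos] with z hz
  rw [← deriv_const_mul_field]
  exact (hasDerivAt_two_mul_qpolyGen p ps s (by simpa using hz)).deriv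

end

theorem qpoly_recurrence (p ps : ℝ) :
    (∀ n : ℕ, ∀ s : ℂ,
      2 * qpoly p ps (n + 1) s =
        ((ps : ℂ) - (p : ℂ) - 2 * s) * qpoly p ps n s
          + ((ps : ℂ) - s) * qpoly p ps n (s + 1)
          - ((p : ℂ) + s) * qpoly p ps n (s - 1)) ∧
    (∀ s : ℂ, qpoly p ps 0 s = 1) := by
  refine ⟨fun n s => ?_, fun s => by simp [qpoly]⟩
  have hsmooth (c t : ℂ) : ContDiffAt ℂ n (fun z => c * qpolyGen p ps t z) 0 :=
    contDiffAt_const.mul (analyticAt_qpolyGen p ps t).contDiffAt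
  simp only [qpoly_eq_iteratedDeriv_qpolyGen, iteratedDeriv_succ', ← iteratedDeriv_const_mul_field,
    ((two_mul_deriv_qpolyGen_eventuallyEq p ps s).iteratedDeriv n).eq_of_nhds]
  rw [iteratedDeriv_fun_sub ((hsmooth _ s).add (hsmooth _ _)) (hsmooth _ _),
    iteratedDeriv_fun_add (hsmooth _ s) (hsmooth _ _)]
end

section
/- Let p and p* be real numbers. The polynomials q_n satisfy the three-term recurrence q_{n+1}(s) = (p* − p − 2s)·q_n(s) + n(n − p* − p − 1)·q_{n−1}(s) for all n ≥ 1 and all s ∈ ℂ, with q_0(s) = 1 and q_1(s) = p* − p − 2s. -/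
/-!
`F(z) = (1 - z)^a (1 + z)^b` satisfies the Pearson equation `(1 - z²) F' = (b - a - (a + b) z) F`
on the unit disc. Differentiating it `n` times gives
`(1 - z²) F⁽ⁿ⁺¹⁾ = (b - a + (2n - a - b) z) F⁽ⁿ⁾ + n (n - 1 - a - b) F⁽ⁿ⁻¹⁾`,
which at `z = 0`, with `a = p + s` and `b = p* - s`, is the recurrence.
-/

open Complex Metric Set

section PearsonEquation

variable {𝕜 : Type*} [NontriviallyNormedField 𝕜] [CompleteSpace 𝕜] {f : 𝕜 → 𝕜}

theorem AnalyticAt.hasDerivAt_iteratedDeriv {z : 𝕜} (hf : AnalyticAt 𝕜 f z) (n : ℕ) :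
    HasDerivAt (iteratedDeriv n f) (iteratedDeriv (n + 1) f z) z := by
  rw [iteratedDeriv_succ, iteratedDeriv_eq_iterate]
  exact (hf.iterated_deriv n).differentiableAt.hasDerivAt

/-- At `n = 0` the last term vanishes, so the junk value `0 - 1 = 0` of `n - 1` is harmless. -/
theorem iteratedDeriv_recurrence_of_pearson {U : Set 𝕜} (hU : IsOpen U)
    (hf : AnalyticOnNhd 𝕜 f U) (c d : 𝕜)
    (hode : EqOn (fun z => (1 - z ^ 2) * deriv f z) (fun z => (c + d * z) * f z) U) (n : ℕ) :
    EqOn (fun z => (1 - z ^ 2) * iteratedDeriv (n + 1) f z)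
      (fun z => (c + (2 * n + d) * z) * iteratedDeriv n f z
        + n * (n - 1 + d) * iteratedDeriv (n - 1) f z) U := by
  induction n with
  | zero => simpa using hode
  | succ n ih =>
    intro z hz
    have hg := (hf z hz).hasDerivAt_iteratedDeriv
    have hL : HasDerivAt (fun w => (1 - w ^ 2) * iteratedDeriv (n + 1) f w)
        (-(2 * z) * iteratedDeriv (n + 1) f z + (1 - z ^ 2) * iteratedDeriv (n + 2) f z) z := by
      refine (((hasDerivAt_pow 2 z).const_sub 1).mul (hg (n + 1))).congr_deriv ?_
      push_cast
      ring
    have hR : HasDerivAt (fun w => (c + (2 * n + d) * w) * iteratedDeriv n f w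
          + n * (n - 1 + d) * iteratedDeriv (n - 1) f w)
        ((2 * n + d) * iteratedDeriv n f z + (c + (2 * n + d) * z) * iteratedDeriv (n + 1) f z
          + n * (n - 1 + d) * iteratedDeriv (n - 1 + 1) f z) z := by
      refine ((((hasDerivAt_id z).const_mul _).const_add c).mul (hg n)).add
        ((hg (n - 1)).const_mul _) |>.congr_deriv ?_
      simp
    have hderiv := hL.unique (hR.congr_of_eventuallyEq (ih.eventuallyEq_of_mem (hU.mem_nhds hz)))
    have hshift : (n : 𝕜) * iteratedDeriv (n - 1 + 1) f z = n * iteratedDeriv n f z := by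
      rcases n with _ | n <;> simp
    push_cast
    linear_combination hderiv + (n - 1 + d) * hshift

end PearsonEquation

noncomputable def jacobiWeight (a b z : ℂ) : ℂ := (1 - z) ^ a * (1 + z) ^ b

theorem Complex.one_sub_mem_slitPlane_of_norm_lt_one {z : ℂ} (hz : ‖z‖ < 1) :
    1 - z ∈ slitPlane := by
  simpa [sub_eq_add_neg] using mem_slitPlane_of_norm_lt_one (z := -z) (by simpa using hz)

theorem analyticOnNhd_jacobiWeight (a b : ℂ) : AnalyticOnNhd ℂ (jacobiWeight a b) (ball 0 1) := by
  intro z hz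
  rw [mem_ball_zero_iff] at hz
  exact ((analyticAt_const.sub analyticAt_id).cpow analyticAt_const
    (one_sub_mem_slitPlane_of_norm_lt_one hz)).mul
    ((analyticAt_const.add analyticAt_id).cpow analyticAt_const (mem_slitPlane_of_norm_lt_one hz))

theorem jacobiWeight_pearson (a b : ℂ) :
    EqOn (fun z => (1 - z ^ 2) * deriv (jacobiWeight a b) z)
      (fun z => (b - a + -(a + b) * z) * jacobiWeight a b z) (ball 0 1) := by
  intro z hz
  rw [mem_ball_zero_iff] at hz
  have h₁ := one_sub_mem_slitPlane_of_norm_lt_one hz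
  have h₂ := mem_slitPlane_of_norm_lt_one hz
  have hderiv : HasDerivAt (jacobiWeight a b)
      (-a * (1 - z) ^ (a - 1) * (1 + z) ^ b + b * (1 - z) ^ a * (1 + z) ^ (b - 1)) z := by
    refine ((((hasDerivAt_id z).const_sub 1).cpow_const h₁).mul
      (((hasDerivAt_id z).const_add 1).cpow_const h₂)).congr_deriv ?_
    simp only [id]
    ring
  beta_reduce
  rw [hderiv.deriv, jacobiWeight, cpow_sub _ _ (slitPlane_ne_zero h₁),
    cpow_sub _ _ (slitPlane_ne_zero h₂), cpow_one, cpow_one]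
  field_simp [slitPlane_ne_zero h₁, slitPlane_ne_zero h₂]
  ring

theorem jacobiWeight_zero (a b : ℂ) : jacobiWeight a b 0 = 1 := by
  simp [jacobiWeight]

theorem qpoly_eq_iteratedDeriv_jacobiWeight (p ps : ℝ) (n : ℕ) (s : ℂ) :
    qpoly p ps n s = iteratedDeriv n (jacobiWeight (p + s) (ps - s)) 0 :=
  rfl

theorem qpoly_three_term_recurrence (p ps : ℝ) :
    (∀ n : ℕ, 1 ≤ n → ∀ s : ℂ,
      qpoly p ps (n + 1) s =
        ((ps : ℂ) - (p : ℂ) - 2 * s) * qpoly p ps n s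
          + (n : ℂ) * ((n : ℂ) - (ps : ℂ) - (p : ℂ) - 1) * qpoly p ps (n - 1) s) ∧
    (∀ s : ℂ, qpoly p ps 0 s = 1) ∧
    (∀ s : ℂ, qpoly p ps 1 s = (ps : ℂ) - (p : ℂ) - 2 * s) := by
  have hrec (s : ℂ) (n : ℕ) : qpoly p ps (n + 1) s =
      ((ps : ℂ) - (p : ℂ) - 2 * s) * qpoly p ps n s
        + (n : ℂ) * ((n : ℂ) - (ps : ℂ) - (p : ℂ) - 1) * qpoly p ps (n - 1) s := by
    have h := iteratedDeriv_recurrence_of_pearson isOpen_ball (analyticOnNhd_jacobiWeight _ _) _ _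
      (jacobiWeight_pearson ((p : ℂ) + s) ((ps : ℂ) - s)) n (mem_ball_self one_pos)
    simp only [qpoly_eq_iteratedDeriv_jacobiWeight]
    beta_reduce at h
    linear_combination h
  have hq0 (s : ℂ) : qpoly p ps 0 s = 1 := by
    rw [qpoly_eq_iteratedDeriv_jacobiWeight, iteratedDeriv_zero, jacobiWeight_zero]
  exact ⟨fun n _ s => hrec s n, hq0, fun s => by simpa [hq0] using hrec s 0⟩
end

section
/- Let p and p* be real numbers and c = (p* − p)/2. For every n ≥ 0 and every real number x, the complex number i^n · q_n(c + i x) is real; that is, the function q̂_n(x) := i^n q_n(c + i x) is a real-valued function of the real variable x (in fact a real polynomial in x). -/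
/-!
Write `a = p + s`, `b = p* - s` and `g(z) = (1 - z)^a (1 + z)^b`. For `s = c + i x` with
`c = (p* - p)/2` one has `conj a = b`, and since the principal branch commutes with conjugation
off the negative real axis, `conj (g (conj z)) = g (-z)` near `0`. Differentiating `n` times at `0`
gives `conj q_n = (-1)^n q_n`, and therefore `conj (i^n q_n) = (-i)^n (-1)^n q_n = i^n q_n`.
-/

open Complex ComplexConjugate Filter Topology

section StarConj

variable {𝕜 : Type*} [NontriviallyNormedField 𝕜] [StarRing 𝕜] [NormedStarGroup 𝕜]
  {F : Type*} [NormedAddCommGroup F] [NormedSpace 𝕜 F] [StarAddMonoid F] [StarModule 𝕜 F]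
  [ContinuousStar F]

theorem iteratedDeriv_star_conj (f : 𝕜 → F) (n : ℕ) :
    iteratedDeriv n (star ∘ f ∘ starRingEnd 𝕜) = star ∘ iteratedDeriv n f ∘ starRingEnd 𝕜 := by
  induction n with
  | zero => simp only [iteratedDeriv_zero]
  | succ n ih => rw [iteratedDeriv_succ, iteratedDeriv_succ, ih, deriv_star_conj]

theorem star_iteratedDeriv_zero_of_star_conj_eventuallyEq_comp_neg {f : 𝕜 → F}
    (hf : star ∘ f ∘ starRingEnd 𝕜 =ᶠ[𝓝 0] fun z ↦ f (-z)) (n : ℕ) :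
    star (iteratedDeriv n f 0) = (-1 : 𝕜) ^ n • iteratedDeriv n f 0 := by
  calc star (iteratedDeriv n f 0)
      = iteratedDeriv n (star ∘ f ∘ starRingEnd 𝕜) 0 := by
        rw [iteratedDeriv_star_conj, Function.comp_apply, Function.comp_apply, map_zero]
    _ = iteratedDeriv n (fun z ↦ f (-z)) 0 := hf.iteratedDeriv_eq n
    _ = (-1 : 𝕜) ^ n • iteratedDeriv n f 0 := by rw [iteratedDeriv_comp_neg, neg_zero]

end StarConj

theorem conj_conj_cpow_of_mem_slitPlane {w : ℂ} (hw : w ∈ slitPlane) (a : ℂ) :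
    conj (conj w ^ a) = w ^ conj a :=
  (cpow_conj w a (slitPlane_arg_ne_pi hw)).symm

theorem conj_comp_one_sub_cpow_mul_one_add_cpow_comp_conj {a b : ℂ} (hab : conj a = b) :
    conj ∘ (fun z : ℂ ↦ (1 - z) ^ a * (1 + z) ^ b) ∘ conj
      =ᶠ[𝓝 0] fun z ↦ (1 - -z) ^ a * (1 + -z) ^ b := by
  have hba : conj b = a := by rw [← hab, conj_conj]
  filter_upwards [Metric.ball_mem_nhds (0 : ℂ) one_pos] with z hz
  have hz' : ‖z‖ < 1 := by simpa using hz
  have hplus : 1 + z ∈ slitPlane := mem_slitPlane_of_norm_lt_one hz'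
  have hminus : 1 - z ∈ slitPlane := by
    simpa [sub_eq_add_neg] using mem_slitPlane_of_norm_lt_one (z := -z) (by simpa using hz')
  have e₁ : conj ((1 - conj z) ^ a) = (1 - z) ^ b := by
    rw [← hab, ← conj_conj_cpow_of_mem_slitPlane hminus, map_sub, map_one]
  have e₂ : conj ((1 + conj z) ^ b) = (1 + z) ^ a := by
    rw [← hba, ← conj_conj_cpow_of_mem_slitPlane hplus, map_add, map_one]
  simp only [Function.comp_apply, map_mul, e₁, e₂, sub_neg_eq_add, ← sub_eq_add_neg]
  ring

theorem im_I_pow_mul_eq_zero_of_conj_eq {w : ℂ} (n : ℕ) (hw : conj w = (-1) ^ n * w) :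
    (I ^ n * w).im = 0 := by
  rw [← conj_eq_iff_im, map_mul, hw, map_pow, conj_I, ← mul_assoc, ← mul_pow]
  simp

theorem qpoly_hat_real (p ps : ℝ) (c : ℝ) (hc : c = (ps - p) / 2) (n : ℕ) (x : ℝ) :
    (Complex.I ^ n * qpoly p ps n ((c : ℂ) + Complex.I * (x : ℂ))).im = 0 := by
  set s : ℂ := (c : ℂ) + I * (x : ℂ)
  have hconj : conj ((p : ℂ) + s) = (ps : ℂ) - s := by
    simp only [s, map_add, map_mul, conj_ofReal, conj_I, hc]
    push_cast
    ring
  exact im_I_pow_mul_eq_zero_of_conj_eq n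
    (star_iteratedDeriv_zero_of_star_conj_eventuallyEq_comp_neg
      (conj_comp_one_sub_cpow_mul_one_add_cpow_comp_conj hconj) n)
end

section
/- Let p and p* be real numbers. For every n ≥ 0 and every s ∈ ℂ, q_n(s) = ∑_{k=0}^{n} C(n,k) (p*)_{n−k} · 𝔐_k(−s; −p, −1), where C(n,k) is the usual binomial coefficient, (x)_m = x(x−1)⋯(x−m+1) is the falling factorial with (x)_0 = 1, and 𝔐_k(x; b, c) denotes the Meixner polynomial. -/
/-- The Meixner polynomial `𝔐_k(x; b, c)`: `k!` times the `k`-th Taylor coefficient at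
`z = 0` of `z ↦ (1 - z/c)^x (1 - z)^(-x-b)` (principal branch powers). -/
noncomputable def meixner (k : ℕ) (x : ℂ) (b : ℝ) (c : ℝ) : ℂ :=
  iteratedDeriv k (fun z : ℂ => (1 - z / (c : ℂ)) ^ x * (1 - z) ^ (-x - (b : ℂ))) 0

/-- The falling factorial `(x)_m = x(x-1)⋯(x-m+1)`, with `(x)_0 = 1`. -/
noncomputable def fallingFac (x : ℝ) (m : ℕ) : ℝ :=
  ∏ j ∈ Finset.range m, (x - j)

open Complex Finset Filter Topology

lemma iteratedDeriv_cpow_const (c : ℂ) (k : ℕ) {z : ℂ} (hz : z ∈ slitPlane) :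
    iteratedDeriv k (· ^ c) z = (∏ j ∈ range k, (c - j)) * z ^ (c - k) := by
  induction k generalizing z with
  | zero => simp
  | succ k ih =>
    have hpow : HasDerivAt (· ^ (c - k)) ((c - k) * z ^ (c - k - 1)) z :=
      (hasStrictDerivAt_cpow_const hz).hasDerivAt
    have heq : iteratedDeriv k (· ^ c) =ᶠ[𝓝 z] fun w => (∏ j ∈ range k, (c - j)) * w ^ (c - k) :=
      eventually_of_mem (isOpen_slitPlane.mem_nhds hz) fun w hw => ih hw
    rw [iteratedDeriv_succ, heq.deriv_eq, (hpow.const_mul _).deriv, prod_range_succ]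
    push_cast
    ring_nf

lemma iteratedDeriv_one_add_cpow_const_zero (c : ℂ) (k : ℕ) :
    iteratedDeriv k (fun z : ℂ => (1 + z) ^ c) 0 = ∏ j ∈ range k, (c - j) := by
  rw [congrFun (iteratedDeriv_comp_const_add k (· ^ c) 1) 0, add_zero,
    iteratedDeriv_cpow_const c k one_mem_slitPlane, one_cpow, mul_one]

lemma meixner_neg_one (k : ℕ) (x : ℂ) (b : ℝ) :
    meixner k x b (-1) = iteratedDeriv k (fun z => (1 + z) ^ x * (1 - z) ^ (-x - b)) 0 := by
  simp only [meixner, ofReal_neg, ofReal_one, div_neg, div_one, sub_neg_eq_add]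

theorem qpoly_eq_meixner_sum (p ps : ℝ) (n : ℕ) (s : ℂ) :
    qpoly p ps n s =
      ∑ k ∈ Finset.range (n + 1),
        (n.choose k : ℂ) * (fallingFac ps (n - k) : ℂ) * meixner k (-s) (-p) (-1) := by
  set M : ℂ → ℂ := fun z => (1 + z) ^ (-s) * (1 - z) ^ (-(-s) - ((-p : ℝ) : ℂ))
  have hsplit : (fun z : ℂ => (1 - z) ^ ((p : ℂ) + s) * (1 + z) ^ ((ps : ℂ) - s)) =ᶠ[𝓝 0]
      M * fun z => (1 + z) ^ (ps : ℂ) := by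
    have hne : ∀ᶠ z : ℂ in 𝓝 0, 1 + z ≠ 0 :=
      (continuous_const.add continuous_id).continuousAt.eventually_ne (by simp)
    filter_upwards [hne] with z hz
    simp only [M, Pi.mul_apply, ofReal_neg, neg_neg, sub_neg_eq_add]
    rw [sub_eq_neg_add (ps : ℂ), cpow_add _ _ hz, add_comm (p : ℂ)]
    ring
  have hM_analytic : AnalyticAt ℂ M 0 := by fun_prop (disch := simp)
  have hpow_analytic : AnalyticAt ℂ (fun z : ℂ => (1 + z) ^ (ps : ℂ)) 0 := by
    fun_prop (disch := simp)
  rw [qpoly, hsplit.iteratedDeriv_eq,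
    iteratedDeriv_mul hM_analytic.contDiffAt hpow_analytic.contDiffAt]
  refine sum_congr rfl fun k _ => ?_
  rw [iteratedDeriv_one_add_cpow_const_zero, meixner_neg_one, fallingFac, ofReal_prod]
  simp only [ofReal_sub, ofReal_natCast]
  exact mul_right_comm _ _ _
end

section
/- Let p and p* be real numbers and n ≥ 0. Define Φ_n(x) = ∑_{k=0}^{n} C(n,k) (p*)_{n−k} · k! · L_k^{(−p−1)}(x) · e^{−x/2} for x > 0. Then for every s ∈ ℂ with Re s > 0, the integral ∫₀^∞ Φ_n(2πx) x^{s−1} dx converges and equals q_n(s) · π^{−s} · Γ(s), where Γ is the Gamma function. -/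
open MeasureTheory Real Set

/-- Generalized binomial coefficient `C(w, m) = w(w-1)⋯(w-m+1)/m!` over the reals. -/
noncomputable def genBinomR (w : ℝ) (m : ℕ) : ℝ :=
  (∏ j ∈ Finset.range m, (w - j)) / (m.factorial : ℝ)

/-- The generalized Laguerre polynomial
`L_k^{(α)}(x) = ∑_{j=0}^k ((-1)^j / j!) C(k+α, k-j) x^j`. -/
noncomputable def laguerre (α : ℝ) (k : ℕ) (x : ℝ) : ℝ :=
  ∑ j ∈ Finset.range (k + 1),
    ((-1 : ℝ) ^ j / (j.factorial : ℝ)) * genBinomR ((k : ℝ) + α) (k - j) * x ^ j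

/-- `Φ_n(x) = ∑_{k=0}^n C(n,k) (p*)_{n-k} k! L_k^{(-p-1)}(x) e^{-x/2}`. -/
noncomputable def PhiFun (p ps : ℝ) (n : ℕ) (x : ℝ) : ℝ :=
  ∑ k ∈ Finset.range (n + 1),
    (n.choose k : ℝ) * fallingFac ps (n - k) * (k.factorial : ℝ) *
      laguerre (-p - 1) k x * Real.exp (-x / 2)

/-!
Expanding the Laguerre polynomials writes `Φ_n(2πx)` as a finite combination of
`x^j e^{-πx}`, whose Mellin transforms are `π^{-s-j} Γ(s+j) = π^{-s} Γ(s) (s)^{(j)} / π^j`.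
What remains is a polynomial identity in `s`, best read on exponential generating functions,
where binomial convolutions become products: by Leibniz, `q_n(s)` is the convolution of
`(-1)^i (p+s)_i` with `(p*-s)_j`, and Chu–Vandermonde splits `(p*-s)_j` into its `-s` and `p*`
parts. This reduces everything to one Laguerre polynomial, i.e. to the generating-function
identity `(1+z)^q (1 - 2z/(1+z))^{-s} = (1+z)^{q+s} (1-z)^{-s}`.
-/

open Finset Polynomial Filter Topology

section BinomialConvolution

variable {R : Type*}

theorem sum_antidiagonal_choose_succ_mul_fst [NonAssocSemiring R] (f : ℕ → ℕ → R)
    (n : ℕ) :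
    ∑ ij ∈ antidiagonal (n + 1), ((n + 1).choose ij.1 : R) * f ij.1 ij.2 =
      ∑ ij ∈ antidiagonal n, (n.choose ij.1 : R) * f ij.1 (ij.2 + 1) +
        ∑ ij ∈ antidiagonal n, (n.choose ij.1 : R) * f (ij.1 + 1) ij.2 := by
  rw [sum_antidiagonal_choose_succ_mul]
  congr 1
  refine sum_congr rfl fun ij hij => ?_
  rw [Nat.choose_symm_of_eq_add (mem_antidiagonal.mp hij).symm]

variable [CommSemiring R]

def binomConv (a b : ℕ → R) (n : ℕ) : R :=
  ∑ ij ∈ antidiagonal n, (n.choose ij.1 : R) * (a ij.1 * b ij.2)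

theorem binomConv_succ (a b : ℕ → R) (n : ℕ) :
    binomConv a b (n + 1) =
      binomConv a (fun j => b (j + 1)) n + binomConv (fun i => a (i + 1)) b n :=
  sum_antidiagonal_choose_succ_mul_fst (fun i j => a i * b j) n

theorem binomConv_pow_mul (c : R) (a b : ℕ → R) (n : ℕ) :
    binomConv (fun i => c ^ i * a i) (fun j => c ^ j * b j) n = c ^ n * binomConv a b n := by
  rw [binomConv, binomConv, mul_sum]
  refine sum_congr rfl fun ij hij => ?_
  rw [← mem_antidiagonal.mp hij, pow_add]
  ring

end BinomialConvolution

section ExponentialGeneratingFunction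

variable {K : Type*} [Field K] [CharZero K]

def egf (a : ℕ → K) : PowerSeries K :=
  PowerSeries.mk fun n => a n / n.factorial

theorem egf_binomConv (a b : ℕ → K) : egf (binomConv a b) = egf a * egf b := by
  ext n
  simp only [egf, PowerSeries.coeff_mk, PowerSeries.coeff_mul, binomConv, sum_div]
  refine sum_congr rfl fun ij hij => ?_
  obtain ⟨i, j⟩ := ij
  have hi : (i.factorial : K) ≠ 0 := Nat.cast_ne_zero.mpr i.factorial_ne_zero
  have hj : (j.factorial : K) ≠ 0 := Nat.cast_ne_zero.mpr j.factorial_ne_zero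
  have hij' : ((i + j).factorial : K) ≠ 0 := Nat.cast_ne_zero.mpr (i + j).factorial_ne_zero
  rw [← mem_antidiagonal.mp hij, Nat.cast_add_choose]
  field_simp

theorem egf_injective : Function.Injective (egf : (ℕ → K) → PowerSeries K) := by
  intro a b h
  funext n
  have hn := congrArg (PowerSeries.coeff n) h
  simp only [egf, PowerSeries.coeff_mk] at hn
  exact (div_left_inj' (Nat.cast_ne_zero.mpr n.factorial_ne_zero)).mp hn

theorem binomConv_assoc (a b c : ℕ → K) :
    binomConv (binomConv a b) c = binomConv a (binomConv b c) :=
  egf_injective (by simp only [egf_binomConv, mul_assoc])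

end ExponentialGeneratingFunction

section Pochhammer

variable {R : Type*} [CommRing R]

theorem descPochhammer_eval_add (x y : R) (n : ℕ) :
    (descPochhammer R n).eval (x + y) =
      binomConv (fun i => (descPochhammer R i).eval x)
        (fun j => (descPochhammer R j).eval y) n := by
  have smeval_eq (r : R) (m : ℕ) :
      (descPochhammer ℤ m).smeval r = (descPochhammer R m).eval r := by
    rw [← aeval_eq_smeval, aeval_def, eval₂_eq_eval_map, descPochhammer_map]
  simpa only [smeval_eq, binomConv] using Ring.descPochhammer_smeval_add n (Commute.all x y)

theorem descPochhammer_eval_succ_left (x : R) (n : ℕ) :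
    (descPochhammer R (n + 1)).eval x = x * (descPochhammer R n).eval (x - 1) := by
  simp [descPochhammer_succ_left, eval_comp]

theorem descPochhammer_eval_eq_neg_one_pow_mul (x : R) (n : ℕ) :
    (descPochhammer R n).eval x = (-1) ^ n * (descPochhammer R n).eval (n - 1 - x) := by
  rw [descPochhammer_eval_eq_ascPochhammer R (n - 1 - x),
    show (n : R) - 1 - x - n + 1 = -x by ring, ascPochhammer_eval_neg_eq_descPochhammer,
    ← mul_assoc, ← pow_add, ← two_mul, pow_mul]
  simp

theorem descPochhammer_eval_neg (x : R) (n : ℕ) :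
    (descPochhammer R n).eval (-x) = (-1) ^ n * (ascPochhammer R n).eval x := by
  rw [← neg_neg x, ascPochhammer_eval_neg_eq_descPochhammer, neg_neg, ← mul_assoc, ← pow_add,
    ← two_mul, pow_mul]
  simp

/-- For `R = ℂ` and `0 < re s`: `(-1)^k π^s / Γ(s)` times the Mellin transform of
`k! L_k^{(-q-1)}(2πx) e^{-πx}` at `s`. -/
noncomputable def laguerreMellinCoeff (q s : R) (k : ℕ) : R :=
  ∑ ij ∈ antidiagonal k, (k.choose ij.1 : R) *
    (2 ^ ij.1 * (ascPochhammer R ij.1).eval s * (descPochhammer R ij.2).eval (q - ij.1))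

theorem laguerreMellinCoeff_succ (q s : R) (k : ℕ) :
    laguerreMellinCoeff q s (k + 1) =
      2 * (q + s) * laguerreMellinCoeff (q - 1) s k - (q - k) * laguerreMellinCoeff q s k := by
  rw [laguerreMellinCoeff, sum_antidiagonal_choose_succ_mul_fst (fun i j =>
      2 ^ i * (ascPochhammer R i).eval s * (descPochhammer R j).eval (q - i)), laguerreMellinCoeff,
    laguerreMellinCoeff, mul_sum, mul_sum, ← sum_sub_distrib, ← sum_add_distrib]
  refine sum_congr rfl fun ij hij => ?_
  obtain ⟨i, j⟩ := ij
  obtain rfl : i + j = k := mem_antidiagonal.mp hij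
  have hleft := descPochhammer_eval_succ_left (q - i) j
  have hright := descPochhammer_succ_eval j (q - i)
  simp only [ascPochhammer_succ_eval, Nat.cast_add, Nat.cast_one, pow_succ] at *
  rw [show q - 1 - i = q - i - 1 by ring, show q - (i + 1) = q - i - 1 by ring]
  linear_combination
    ((i + j).choose i * 2 ^ i * (ascPochhammer R i).eval s) * (2 * hleft - hright)

theorem binomConv_descPochhammer_ascPochhammer_succ (q s : R) (k : ℕ) :
    binomConv (fun i => (descPochhammer R i).eval (q + s)) (fun j => (ascPochhammer R j).eval s)
        (k + 1) =
      2 * (q + s) * binomConv (fun i => (descPochhammer R i).eval (q - 1 + s))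
          (fun j => (ascPochhammer R j).eval s) k -
        (q - k) * binomConv (fun i => (descPochhammer R i).eval (q + s))
          (fun j => (ascPochhammer R j).eval s) k := by
  rw [binomConv_succ, binomConv, binomConv, binomConv, binomConv, mul_sum, mul_sum,
    ← sum_sub_distrib, ← sum_add_distrib]
  refine sum_congr rfl fun ij hij => ?_
  obtain ⟨i, j⟩ := ij
  obtain rfl : i + j = k := mem_antidiagonal.mp hij
  have hleft := descPochhammer_eval_succ_left (q + s) i
  have hright := descPochhammer_succ_eval i (q + s)
  simp only [ascPochhammer_succ_eval, Nat.cast_add] at *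
  rw [show q - 1 + s = q + s - 1 by ring]
  linear_combination ((i + j).choose i * (ascPochhammer R j).eval s) * (2 * hleft - hright)

theorem laguerreMellinCoeff_eq_binomConv (q s : R) (k : ℕ) :
    laguerreMellinCoeff q s k =
      binomConv (fun i => (descPochhammer R i).eval (q + s))
        (fun j => (ascPochhammer R j).eval s) k := by
  induction k generalizing q with
  | zero => simp [laguerreMellinCoeff, binomConv]
  | succ k ih =>
    rw [laguerreMellinCoeff_succ, binomConv_descPochhammer_ascPochhammer_succ, ih, ih]

end Pochhammer

theorem iteratedDeriv_cpow_const_s10 {a z : ℂ} (hz : z ∈ Complex.slitPlane) (k : ℕ) :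
    iteratedDeriv k (fun w : ℂ => w ^ a) z = (descPochhammer ℂ k).eval a * z ^ (a - k) := by
  induction k generalizing z with
  | zero => simp
  | succ k ih =>
    have heq : iteratedDeriv k (fun w : ℂ => w ^ a) =ᶠ[𝓝 z]
        fun w => (descPochhammer ℂ k).eval a * w ^ (a - k) :=
      eventually_of_mem (Complex.isOpen_slitPlane.mem_nhds hz) fun w hw => ih hw
    rw [iteratedDeriv_succ, heq.deriv_eq, deriv_const_mul_field, Complex.deriv_cpow_const hz,
      descPochhammer_succ_eval]
    push_cast
    ring_nf

theorem iteratedDeriv_one_add_cpow_zero (a : ℂ) (k : ℕ) :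
    iteratedDeriv k (fun z : ℂ => (1 + z) ^ a) 0 = (descPochhammer ℂ k).eval a := by
  simp [iteratedDeriv_comp_const_add k (fun w : ℂ => w ^ a),
    iteratedDeriv_cpow_const_s10 Complex.one_mem_slitPlane]

theorem iteratedDeriv_one_sub_cpow_zero (a : ℂ) (k : ℕ) :
    iteratedDeriv k (fun z : ℂ => (1 - z) ^ a) 0 = (-1) ^ k * (descPochhammer ℂ k).eval a := by
  simp [iteratedDeriv_comp_const_sub k (fun w : ℂ => w ^ a),
    iteratedDeriv_cpow_const_s10 Complex.one_mem_slitPlane]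

theorem qpoly_eq_binomConv (p ps : ℝ) (n : ℕ) (s : ℂ) :
    qpoly p ps n s = binomConv (fun i => (-1) ^ i * (descPochhammer ℂ i).eval ((p : ℂ) + s))
      (fun j => (descPochhammer ℂ j).eval ((ps : ℂ) - s)) n := by
  have hsub : ContDiffAt ℂ n (fun z : ℂ => (1 - z) ^ ((p : ℂ) + s)) 0 :=
    (AnalyticAt.cpow (by fun_prop) analyticAt_const (by simp)).contDiffAt
  have hadd : ContDiffAt ℂ n (fun z : ℂ => (1 + z) ^ ((ps : ℂ) - s)) 0 :=
    (AnalyticAt.cpow (by fun_prop) analyticAt_const (by simp)).contDiffAt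
  rw [qpoly, iteratedDeriv_fun_mul hsub hadd, binomConv, Nat.sum_antidiagonal_eq_sum_range_succ
    (fun i j => (n.choose i : ℂ) * ((-1) ^ i * (descPochhammer ℂ i).eval ((p : ℂ) + s) *
      (descPochhammer ℂ j).eval ((ps : ℂ) - s)))]
  simp only [iteratedDeriv_one_sub_cpow_zero, iteratedDeriv_one_add_cpow_zero, mul_assoc]

section HasMellin

variable {E : Type*} [NormedAddCommGroup E] [NormedSpace ℂ E]

theorem hasMellin_sum {ι : Type*} (t : Finset ι) {f : ι → ℝ → E} {m : ι → E} {s : ℂ}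
    (hf : ∀ i ∈ t, HasMellin (f i) s (m i)) :
    HasMellin (fun x => ∑ i ∈ t, f i x) s (∑ i ∈ t, m i) := by
  have hconv : ∀ i ∈ t, MellinConvergent (f i) s := fun i hi => (hf i hi).1
  refine ⟨?_, ?_⟩
  · unfold MellinConvergent IntegrableOn
    simpa only [smul_sum] using integrable_finsetSum t hconv
  simp only [mellin, smul_sum]
  rw [integral_finsetSum t hconv]
  exact sum_congr rfl fun i hi => (hf i hi).2

theorem HasMellin.const_smul {f : ℝ → E} {s : ℂ} {m : E} (hf : HasMellin f s m) (c : ℂ) :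
    HasMellin (fun x => c • f x) s (c • m) :=
  hf.2 ▸ hasMellin_const_smul hf.1 c

end HasMellin

theorem hasMellin_exp_neg_mul {b : ℝ} (hb : 0 < b) {s : ℂ} (hs : 0 < s.re) :
    HasMellin (fun x : ℝ => ((rexp (-(b * x)) : ℝ) : ℂ)) s
      ((b : ℂ) ^ (-s) * Complex.Gamma s) := by
  set f : ℝ → ℂ := fun x => ((rexp (-x) : ℝ) : ℂ)
  have hconv : MellinConvergent f s := by
    simpa only [MellinConvergent, smul_eq_mul, mul_comm] using Complex.GammaIntegral_convergent hs
  refine ⟨(MellinConvergent.comp_mul_left (f := f) hb).mpr hconv, ?_⟩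
  rw [mellin_comp_mul_left f s hb, ← Complex.GammaIntegral_eq_mellin,
    ← Complex.Gamma_eq_integral hs, smul_eq_mul]

theorem Complex.Gamma_add_nat_eq_mul_ascPochhammer {s : ℂ} (hs : 0 < s.re) (j : ℕ) :
    Complex.Gamma (s + j) = Complex.Gamma s * (ascPochhammer ℂ j).eval s := by
  have hs' : ∀ m : ℕ, s ≠ -m := fun m h => by
    have := congrArg Complex.re h
    simp only [Complex.neg_re, Complex.natCast_re] at this
    linarith [m.cast_nonneg (α := ℝ)]
  rw [← Complex.Gamma_add_nat_div_Gamma_eq s hs',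
    mul_div_cancel₀ _ (Complex.Gamma_ne_zero_of_re_pos hs)]

theorem hasMellin_pow_mul_exp_neg_mul {b : ℝ} (hb : 0 < b) {s : ℂ} (hs : 0 < s.re) (j : ℕ) :
    HasMellin (fun x : ℝ => ((x ^ j * rexp (-(b * x)) : ℝ) : ℂ)) s
      ((b : ℂ) ^ (-s) * Complex.Gamma s * ((ascPochhammer ℂ j).eval s / (b : ℂ) ^ j)) := by
  have hsj : 0 < (s + j).re := by simpa using add_pos_of_pos_of_nonneg hs j.cast_nonneg
  obtain ⟨hconv, hval⟩ := hasMellin_exp_neg_mul hb hsj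
  have hfun : (fun x : ℝ => ((x ^ j * rexp (-(b * x)) : ℝ) : ℂ)) =
      fun x : ℝ => (x : ℂ) ^ (j : ℂ) • ((rexp (-(b * x)) : ℝ) : ℂ) := by
    ext x
    simp only [Complex.cpow_natCast, smul_eq_mul, Complex.ofReal_mul, Complex.ofReal_pow]
  have hb' : (b : ℂ) ≠ 0 := Complex.ofReal_ne_zero.mpr hb.ne'
  rw [hfun]
  refine ⟨MellinConvergent.cpow_smul.mpr hconv, ?_⟩
  rw [mellin_cpow_smul, hval, Complex.Gamma_add_nat_eq_mul_ascPochhammer hs, neg_add,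
    Complex.cpow_add _ _ hb', Complex.cpow_neg _ (j : ℂ), Complex.cpow_natCast]
  ring

theorem ofReal_genBinomR (w : ℝ) (m : ℕ) :
    ((genBinomR w m : ℝ) : ℂ) = (descPochhammer ℂ m).eval (w : ℂ) / m.factorial := by
  rw [genBinomR, descPochhammer_eval_eq_prod_range]
  push_cast
  rfl

theorem ofReal_fallingFac (x : ℝ) (m : ℕ) :
    ((fallingFac x m : ℝ) : ℂ) = (descPochhammer ℂ m).eval (x : ℂ) := by
  rw [fallingFac, descPochhammer_eval_eq_prod_range]
  push_cast
  rfl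

theorem factorial_mul_sum_laguerre_coeff_eq_binomConv (α : ℝ) (k : ℕ) (s : ℂ) :
    (k.factorial : ℂ) * ∑ j ∈ range (k + 1),
        (((-1) ^ j / j.factorial * genBinomR (k + α) (k - j) : ℝ) : ℂ) *
          (2 ^ j * (ascPochhammer ℂ j).eval s) =
      binomConv (fun i => (-1) ^ i * (descPochhammer ℂ i).eval (s - α - 1))
        (fun j => (descPochhammer ℂ j).eval (-s)) k := by
  have hterm : ∀ j ∈ range (k + 1),
      (k.factorial : ℂ) * ((((-1) ^ j / j.factorial * genBinomR (k + α) (k - j) : ℝ) : ℂ) *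
          (2 ^ j * (ascPochhammer ℂ j).eval s)) =
        (-1) ^ k * ((k.choose j : ℂ) * (2 ^ j * (ascPochhammer ℂ j).eval s *
          (descPochhammer ℂ (k - j)).eval ((-α - 1 : ℂ) - j))) := by
    intro j hj
    have hjk : j ≤ k := Nat.lt_succ_iff.mp (mem_range.mp hj)
    have hfac : (k.factorial : ℂ) = k.choose j * j.factorial * (k - j).factorial := by
      exact_mod_cast (Nat.choose_mul_factorial_mul_factorial hjk).symm
    have hsign : ((-1 : ℂ)) ^ k = (-1) ^ j * (-1) ^ (k - j) := by
      rw [← pow_add, Nat.add_sub_cancel' hjk]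
    have hj0 : (j.factorial : ℂ) ≠ 0 := Nat.cast_ne_zero.mpr j.factorial_ne_zero
    have hkj0 : ((k - j).factorial : ℂ) ≠ 0 := Nat.cast_ne_zero.mpr (k - j).factorial_ne_zero
    have harg : ((k - j : ℕ) : ℂ) - 1 - (((k + α : ℝ)) : ℂ) = (-α - 1 : ℂ) - j := by
      push_cast [Nat.cast_sub hjk]
      ring
    rw [Complex.ofReal_mul, ofReal_genBinomR, descPochhammer_eval_eq_neg_one_pow_mul, harg, hfac,
      hsign]
    push_cast
    field_simp
  rw [mul_sum, sum_congr rfl hterm, ← mul_sum, ← Nat.sum_antidiagonal_eq_sum_range_succ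
    (fun i j => (k.choose i : ℂ) * (2 ^ i * (ascPochhammer ℂ i).eval s *
      (descPochhammer ℂ j).eval ((-α - 1 : ℂ) - i))) k, ← laguerreMellinCoeff,
    laguerreMellinCoeff_eq_binomConv, ← binomConv_pow_mul]
  congr 1
  · ext i
    ring_nf
  · ext j
    rw [descPochhammer_eval_neg]

theorem hasMellin_laguerre (α : ℝ) (k : ℕ) {s : ℂ} (hs : 0 < s.re) :
    HasMellin
      (fun x : ℝ => ((laguerre α k (2 * π * x) * rexp (-(2 * π * x) / 2) : ℝ) : ℂ)) s
      ((π : ℂ) ^ (-s) * Complex.Gamma s / k.factorial *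
        binomConv (fun i => (-1) ^ i * (descPochhammer ℂ i).eval (s - α - 1))
          (fun j => (descPochhammer ℂ j).eval (-s)) k) := by
  set c : ℕ → ℂ := fun j =>
    (((-1) ^ j / j.factorial * genBinomR (k + α) (k - j) : ℝ) : ℂ)
  have hfun :
      (fun x : ℝ => ((laguerre α k (2 * π * x) * rexp (-(2 * π * x) / 2) : ℝ) : ℂ)) =
      fun x : ℝ => ∑ j ∈ range (k + 1),
        (c j * (2 * π : ℂ) ^ j) • ((x ^ j * rexp (-(π * x)) : ℝ) : ℂ) := by
    ext x
    rw [laguerre, sum_mul, Complex.ofReal_sum]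
    refine sum_congr rfl fun j _ => ?_
    rw [show -(2 * π * x) / 2 = -(π * x) by ring]
    simp only [c, smul_eq_mul, Complex.ofReal_mul, Complex.ofReal_pow]
    push_cast
    ring
  rw [hfun]
  convert hasMellin_sum _ fun j _ =>
    (hasMellin_pow_mul_exp_neg_mul pi_pos hs j).const_smul (c j * (2 * π : ℂ) ^ j) using 1
  have hk : (k.factorial : ℂ) ≠ 0 := Nat.cast_ne_zero.mpr k.factorial_ne_zero
  rw [← factorial_mul_sum_laguerre_coeff_eq_binomConv, ← mul_assoc, div_mul_cancel₀ _ hk,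
    mul_sum]
  refine sum_congr rfl fun j _ => ?_
  simp only [c, smul_eq_mul, mul_pow]
  field_simp

theorem qpoly_eq_sum_choose_mul_binomConv (p ps : ℝ) (n : ℕ) (s : ℂ) :
    qpoly p ps n s = ∑ k ∈ range (n + 1), (n.choose k : ℂ) *
      (binomConv (fun i => (-1) ^ i * (descPochhammer ℂ i).eval ((p : ℂ) + s))
        (fun j => (descPochhammer ℂ j).eval (-s)) k *
          (descPochhammer ℂ (n - k)).eval (ps : ℂ)) := by
  have hvandermonde : (fun j => (descPochhammer ℂ j).eval ((ps : ℂ) - s)) =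
      binomConv (fun i => (descPochhammer ℂ i).eval (-s))
        (fun j => (descPochhammer ℂ j).eval (ps : ℂ)) :=
    funext fun j => by rw [sub_eq_neg_add, descPochhammer_eval_add]
  rw [qpoly_eq_binomConv, hvandermonde, ← binomConv_assoc, binomConv,
    Nat.sum_antidiagonal_eq_sum_range_succ (fun i j => (n.choose i : ℂ) *
      (binomConv (fun i => (-1) ^ i * (descPochhammer ℂ i).eval ((p : ℂ) + s))
        (fun j => (descPochhammer ℂ j).eval (-s)) i * (descPochhammer ℂ j).eval (ps : ℂ)))]

theorem hasMellin_PhiFun (p ps : ℝ) (n : ℕ) {s : ℂ} (hs : 0 < s.re) :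
    HasMellin (fun x : ℝ => (PhiFun p ps n (2 * π * x) : ℂ)) s
      (qpoly p ps n s * (π : ℂ) ^ (-s) * Complex.Gamma s) := by
  have hfun : (fun x : ℝ => (PhiFun p ps n (2 * π * x) : ℂ)) = fun x : ℝ =>
      ∑ k ∈ range (n + 1), ((n.choose k * fallingFac ps (n - k) * k.factorial : ℝ) : ℂ) •
        ((laguerre (-p - 1) k (2 * π * x) * rexp (-(2 * π * x) / 2) : ℝ) : ℂ) := by
    ext x
    simp only [PhiFun, Complex.ofReal_sum, smul_eq_mul, ← Complex.ofReal_mul, mul_assoc]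
  rw [hfun]
  convert hasMellin_sum _ fun k _ => (hasMellin_laguerre (-p - 1) k hs).const_smul
    ((n.choose k * fallingFac ps (n - k) * k.factorial : ℝ) : ℂ) using 1
  rw [qpoly_eq_sum_choose_mul_binomConv, sum_mul, sum_mul]
  refine sum_congr rfl fun k _ => ?_
  rw [smul_eq_mul, show (s - ((-p - 1 : ℝ) : ℂ) - 1) = (p : ℂ) + s by push_cast; ring]
  push_cast [ofReal_fallingFac]
  have hk : (k.factorial : ℂ) ≠ 0 := Nat.cast_ne_zero.mpr k.factorial_ne_zero
  field_simp

theorem mellin_PhiFun (p ps : ℝ) (n : ℕ) (s : ℂ) (hs : 0 < s.re) :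
    IntegrableOn (fun x : ℝ => (PhiFun p ps n (2 * π * x) : ℂ) * (x : ℂ) ^ (s - 1))
      (Ioi (0 : ℝ)) ∧
    ∫ x in Ioi (0 : ℝ), (PhiFun p ps n (2 * π * x) : ℂ) * (x : ℂ) ^ (s - 1) =
      qpoly p ps n s * (π : ℂ) ^ (-s) * Complex.Gamma s := by
  simp only [mul_comm _ ((_ : ℂ) ^ (s - 1))]
  exact hasMellin_PhiFun p ps n hs
end

section
/- For each t ∈ (0,1), let φ_zz(ζ(t), t) denote the second complex derivative in z of z ↦ φ(z,t) evaluated at z = ζ(t). Then Re φ_zz(ζ(t), t) > 0 for all t ∈ (0,1); moreover Im φ_zz(ζ(t), t) ≤ 0 if t ∈ (0, 1/√2] and Im φ_zz(ζ(t), t) > 0 if t ∈ (1/√2, 1). -/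
/-!
On the unit circle the saddle point `ζ = √(1-t²) - i t` satisfies `1 - ζ² = 2 i t ζ` and
`ζ⁻¹ = conj ζ`. Hence `φ''(z) = 4 i t z / (1 - z²)² + 1 / z²` collapses at `ζ` to
`-i conj ζ / t + (conj ζ)² = 2(1 - t²) + i √(1-t²) (2t² - 1) / t`, whose real part is positive and
whose imaginary part has the sign of `2t² - 1`.
-/

open Complex Set

/-- `φ(z,t) = i t Log(1+z) - i t Log(1-z) - Log z`, with principal logarithms. -/
noncomputable def phiFn (t : ℝ) (z : ℂ) : ℂ :=
  Complex.I * (t : ℂ) * Complex.log (1 + z) - Complex.I * (t : ℂ) * Complex.log (1 - z) -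
    Complex.log z

/-- The saddle point `ζ(t) = -i t + √(1-t²)`. -/
noncomputable def zetaPt (t : ℝ) : ℂ :=
  -Complex.I * (t : ℂ) + (Real.sqrt (1 - t ^ 2) : ℂ)

def phiDomain : Set ℂ := {z | 1 + z ∈ slitPlane ∧ 1 - z ∈ slitPlane ∧ z ∈ slitPlane}

theorem isOpen_phiDomain : IsOpen phiDomain :=
  (isOpen_slitPlane.preimage (continuous_const.add continuous_id)).inter
    ((isOpen_slitPlane.preimage (continuous_const.sub continuous_id)).inter isOpen_slitPlane)

theorem mem_phiDomain_of_im_ne_zero {z : ℂ} (hz : z.im ≠ 0) : z ∈ phiDomain := by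
  simp [phiDomain, mem_slitPlane_iff, hz]

theorem hasDerivAt_phiFn (t : ℝ) {z : ℂ} (hz : z ∈ phiDomain) :
    HasDerivAt (phiFn t) (I * t * (1 + z)⁻¹ + I * t * (1 - z)⁻¹ - z⁻¹) z := by
  obtain ⟨h₁, h₂, h₃⟩ := hz
  have d₁ := (hasDerivAt_log h₁).comp z ((hasDerivAt_id z).const_add 1)
  have d₂ := (hasDerivAt_log h₂).comp z ((hasDerivAt_id z).const_sub 1)
  exact (((d₁.const_mul (I * t)).sub (d₂.const_mul (I * t))).sub (hasDerivAt_log h₃)).congr_deriv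
    (by ring)

theorem iteratedDeriv_two_phiFn (t : ℝ) {z : ℂ} (hz : z ∈ phiDomain) :
    iteratedDeriv 2 (phiFn t) z = 4 * I * t * z / (1 - z ^ 2) ^ 2 + (z ^ 2)⁻¹ := by
  have hderiv : deriv (phiFn t) =ᶠ[nhds z] fun w => I * t * (1 + w)⁻¹ + I * t * (1 - w)⁻¹ - w⁻¹ :=
    Filter.eventually_of_mem (isOpen_phiDomain.mem_nhds hz) fun _ hw =>
      (hasDerivAt_phiFn t hw).deriv
  obtain ⟨h₁, h₂, h₃⟩ := hz
  have h₁ := slitPlane_ne_zero h₁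
  have h₂ := slitPlane_ne_zero h₂
  have h₃ := slitPlane_ne_zero h₃
  have d : HasDerivAt (fun w => I * t * (1 + w)⁻¹ + I * t * (1 - w)⁻¹ - w⁻¹)
      (-(I * t) / (1 + z) ^ 2 + I * t / (1 - z) ^ 2 + 1 / z ^ 2) z :=
    (((((hasDerivAt_id' z).const_add 1).inv h₁).const_mul (I * t)).add
      ((((hasDerivAt_id' z).const_sub 1).inv h₂).const_mul (I * t)) |>.sub
        ((hasDerivAt_id' z).inv h₃)).congr_deriv (by ring)
  rw [iteratedDeriv_succ, iteratedDeriv_one, hderiv.deriv_eq, d.deriv]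
  have h₄ : 1 - z ^ 2 ≠ 0 := by
    rw [show 1 - z ^ 2 = (1 + z) * (1 - z) by ring]; exact mul_ne_zero h₁ h₂
  field_simp
  ring

theorem zetaPt_eq (t : ℝ) : zetaPt t = √(1 - t ^ 2) - I * t := by
  rw [zetaPt]; ring

theorem zetaPt_im (t : ℝ) : (zetaPt t).im = -t := by
  simp [zetaPt]

theorem ofReal_sqrt_one_sub_sq_sq {t : ℝ} (ht : t ^ 2 ≤ 1) :
    ((√(1 - t ^ 2) : ℝ) : ℂ) ^ 2 = 1 - t ^ 2 := by
  exact_mod_cast Real.sq_sqrt (sub_nonneg.2 ht)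

theorem one_sub_zetaPt_sq {t : ℝ} (ht : t ^ 2 ≤ 1) : 1 - zetaPt t ^ 2 = 2 * I * t * zetaPt t := by
  have hs := ofReal_sqrt_one_sub_sq_sq ht
  rw [zetaPt_eq]
  linear_combination (-1 : ℂ) * hs + (t : ℂ) ^ 2 * I_sq

theorem zetaPt_inv {t : ℝ} (ht : t ^ 2 ≤ 1) : (zetaPt t)⁻¹ = √(1 - t ^ 2) + I * t := by
  have hs := ofReal_sqrt_one_sub_sq_sq ht
  refine inv_eq_of_mul_eq_one_right ?_
  rw [zetaPt_eq]
  linear_combination hs - (t : ℂ) ^ 2 * I_sq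

theorem iteratedDeriv_two_phiFn_zetaPt {t : ℝ} (ht₀ : t ≠ 0) (ht : t ^ 2 ≤ 1) :
    iteratedDeriv 2 (phiFn t) (zetaPt t) =
      (2 * (1 - t ^ 2) : ℝ) + (√(1 - t ^ 2) * (2 * t ^ 2 - 1) / t : ℝ) * I := by
  have htc : (t : ℂ) ≠ 0 := ofReal_ne_zero.2 ht₀
  have hζ : zetaPt t ≠ 0 := fun h => ht₀ (by simpa [h] using zetaPt_im t)
  have hs := ofReal_sqrt_one_sub_sq_sq ht
  have hsaddle : 4 * I * t * zetaPt t / (2 * I * t * zetaPt t) ^ 2 = -I * (zetaPt t)⁻¹ / t := by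
    field_simp
    linear_combination 4 * I_sq
  rw [iteratedDeriv_two_phiFn t (mem_phiDomain_of_im_ne_zero (by simpa [zetaPt_im])),
    one_sub_zetaPt_sq ht, hsaddle, ← inv_pow, zetaPt_inv ht]
  push_cast
  field_simp
  linear_combination (t : ℂ) * hs + (t : ℂ) * (t ^ 2 - 1) * I_sq

theorem le_one_div_sqrt_two_iff {t : ℝ} (ht : 0 ≤ t) : t ≤ 1 / √2 ↔ 2 * t ^ 2 ≤ 1 := by
  rw [one_div, ← Real.sqrt_inv, Real.le_sqrt ht (by norm_num)]
  constructor <;> intro h <;> linarith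

theorem one_div_sqrt_two_lt_iff {t : ℝ} (ht : 0 ≤ t) : 1 / √2 < t ↔ 1 < 2 * t ^ 2 := by
  rw [← not_le, le_one_div_sqrt_two_iff ht, not_le]

theorem phi_second_deriv_at_zetaPt (t : ℝ) (ht : t ∈ Ioo (0 : ℝ) 1) :
    0 < (iteratedDeriv 2 (phiFn t) (zetaPt t)).re ∧
    (t ≤ 1 / Real.sqrt 2 → (iteratedDeriv 2 (phiFn t) (zetaPt t)).im ≤ 0) ∧
    (1 / Real.sqrt 2 < t → 0 < (iteratedDeriv 2 (phiFn t) (zetaPt t)).im) := by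
  obtain ⟨ht₀, ht₁⟩ := ht
  have hval := iteratedDeriv_two_phiFn_zetaPt ht₀.ne' (by nlinarith)
  have hre : (iteratedDeriv 2 (phiFn t) (zetaPt t)).re = 2 * (1 - t ^ 2) := by
    rw [hval, add_re, ofReal_re, re_ofReal_mul, I_re, mul_zero, add_zero]
  have him : (iteratedDeriv 2 (phiFn t) (zetaPt t)).im = √(1 - t ^ 2) * (2 * t ^ 2 - 1) / t := by
    rw [hval, add_im, ofReal_im, im_ofReal_mul, I_im, mul_one, zero_add]
  have hs : 0 < √(1 - t ^ 2) := Real.sqrt_pos.2 (by nlinarith)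
  refine ⟨by rw [hre]; nlinarith, fun h => ?_, fun h => ?_⟩
  · have := (le_one_div_sqrt_two_iff ht₀.le).1 h
    rw [him]
    exact div_nonpos_of_nonpos_of_nonneg (mul_nonpos_of_nonneg_of_nonpos hs.le (by linarith)) ht₀.le
  · have := (one_div_sqrt_two_lt_iff ht₀.le).1 h
    rw [him]
    have : 0 < 2 * t ^ 2 - 1 := by linarith
    positivity
end

section
/- The function t ↦ Im φ(ζ(t), t) is differentiable on (0,1) with derivative d/dt [Im φ(ζ(t), t)] = ln( |1 + ζ(t)| / |1 − ζ(t)| ), and this derivative is strictly positive for every t ∈ (0,1); consequently t ↦ Im φ(ζ(t), t) is strictly increasing on (0,1). -/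
open Complex Set

/-- The `z`-derivative `φ_z(z,t) = -1/z + i t/(1-z) + i t/(1+z)`. -/
noncomputable def phiZ (t : ℝ) (z : ℂ) : ℂ :=
  -1 / z + Complex.I * (t : ℂ) / (1 - z) + Complex.I * (t : ℂ) / (1 + z)

/-! `ζ(t)` is a critical point of `φ(·, t)`, so by the chain rule the `t`-derivative of
`φ(ζ(t), t)` is just the partial derivative `∂ₜφ = i (Log(1 + ζ) - Log(1 - ζ))`, whose imaginary
part is `log (|1 + ζ| / |1 - ζ|)`. This is positive because `Re ζ > 0` puts `ζ` closer to `1`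
than to `-1`. -/

theorem hasDerivAt_phiFn_comp {g : ℝ → ℂ} {g' : ℂ} {t : ℝ} (hg : HasDerivAt g g' t)
    (h₀ : g t ∈ slitPlane) (hp : 1 + g t ∈ slitPlane) (hm : 1 - g t ∈ slitPlane) :
    HasDerivAt (fun u ↦ phiFn u (g u))
      (I * (log (1 + g t) - log (1 - g t)) + phiZ t (g t) * g') t := by
  have hI : HasDerivAt (fun u : ℝ ↦ I * (u : ℂ)) I t := by
    simpa using (hasDerivAt_id t).ofReal_comp.const_mul I
  have hφ := ((hI.mul ((hg.const_add 1).clog_real hp)).sub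
    (hI.mul ((hg.const_sub 1).clog_real hm))).sub (hg.clog_real h₀)
  refine hφ.congr_deriv ?_
  have hg₀ := slitPlane_ne_zero h₀
  have hgp := slitPlane_ne_zero hp
  have hgm := slitPlane_ne_zero hm
  simp only [phiZ]
  field_simp
  ring

theorem phiZ_eq_zero_of_sq_add {t : ℝ} {z : ℂ} (h₀ : z ≠ 0) (hp : 1 + z ≠ 0) (hm : 1 - z ≠ 0)
    (hz : z ^ 2 + 2 * I * t * z = 1) : phiZ t z = 0 := by
  simp only [phiZ]
  field_simp
  linear_combination hz

theorem zetaPt_sq_add {t : ℝ} (ht : t ^ 2 ≤ 1) : zetaPt t ^ 2 + 2 * I * t * zetaPt t = 1 := by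
  have hs : ((Real.sqrt (1 - t ^ 2) : ℝ) : ℂ) ^ 2 = 1 - (t : ℂ) ^ 2 := by
    rw [← ofReal_pow, Real.sq_sqrt (by linarith)]; push_cast; ring
  simp only [zetaPt]
  linear_combination hs - (t : ℂ) ^ 2 * I_sq

@[simp] theorem zetaPt_re (t : ℝ) : (zetaPt t).re = Real.sqrt (1 - t ^ 2) := by simp [zetaPt]

theorem zetaPt_re_pos {t : ℝ} (ht : t ^ 2 < 1) : 0 < (zetaPt t).re := by
  rw [zetaPt_re]; exact Real.sqrt_pos.2 (by linarith)

theorem zetaPt_re_lt_one {t : ℝ} (ht : t ≠ 0) : (zetaPt t).re < 1 := by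
  rw [zetaPt_re, Real.sqrt_lt' one_pos]
  have : 0 < t ^ 2 := by positivity
  linarith

theorem differentiableAt_zetaPt {t : ℝ} (ht : t ^ 2 < 1) : DifferentiableAt ℝ zetaPt t := by
  have : DifferentiableAt ℝ (fun u : ℝ ↦ Real.sqrt (1 - u ^ 2)) t :=
    (by fun_prop : DifferentiableAt ℝ (fun u : ℝ ↦ 1 - u ^ 2) t).sqrt (by linarith)
  unfold zetaPt
  fun_prop

theorem im_I_mul_log_sub_log {a b : ℂ} (ha : a ≠ 0) (hb : b ≠ 0) :
    (I * (log a - log b)).im = Real.log (‖a‖ / ‖b‖) := by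
  simp [log_re, Real.log_div (norm_ne_zero_iff.2 ha) (norm_ne_zero_iff.2 hb)]

theorem norm_one_sub_lt_norm_one_add {z : ℂ} (hz : 0 < z.re) : ‖1 - z‖ < ‖1 + z‖ := by
  rw [← sq_lt_sq₀ (norm_nonneg _) (norm_nonneg _), Complex.sq_norm, Complex.sq_norm,
    normSq_apply, normSq_apply]
  simp only [sub_re, add_re, sub_im, add_im, one_re, one_im]
  nlinarith

theorem hasDerivAt_im_phiFn_zetaPt {t : ℝ} (ht : t ^ 2 < 1) (ht₀ : t ≠ 0) :
    HasDerivAt (fun u ↦ (phiFn u (zetaPt u)).im)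
      (Real.log (‖1 + zetaPt t‖ / ‖1 - zetaPt t‖)) t := by
  have hre := zetaPt_re_pos ht
  have hre₁ := zetaPt_re_lt_one ht₀
  have h₀ : zetaPt t ∈ slitPlane := mem_slitPlane_iff.2 (Or.inl hre)
  have hp : 1 + zetaPt t ∈ slitPlane :=
    mem_slitPlane_iff.2 (Or.inl (by rw [add_re, one_re]; linarith))
  have hm : 1 - zetaPt t ∈ slitPlane :=
    mem_slitPlane_iff.2 (Or.inl (by rw [sub_re, one_re]; linarith))
  have hcrit : phiZ t (zetaPt t) = 0 := phiZ_eq_zero_of_sq_add (slitPlane_ne_zero h₀)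
    (slitPlane_ne_zero hp) (slitPlane_ne_zero hm) (zetaPt_sq_add ht.le)
  have hφ := hasDerivAt_phiFn_comp (differentiableAt_zetaPt ht).hasDerivAt h₀ hp hm
  rw [hcrit, zero_mul, add_zero] at hφ
  have him := imCLM.hasFDerivAt.comp_hasDerivAt t hφ
  rwa [imCLM_apply, im_I_mul_log_sub_log (slitPlane_ne_zero hp) (slitPlane_ne_zero hm)] at him

theorem im_phi_zetaPt_strictMono :
    (∀ t ∈ Ioo (0 : ℝ) 1,
      HasDerivAt (fun u : ℝ => (phiFn u (zetaPt u)).im)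
        (Real.log (‖1 + zetaPt t‖ / ‖1 - zetaPt t‖)) t ∧
      0 < Real.log (‖1 + zetaPt t‖ / ‖1 - zetaPt t‖)) ∧
    StrictMonoOn (fun u : ℝ => (phiFn u (zetaPt u)).im) (Ioo (0 : ℝ) 1) := by
  have hderiv : ∀ t ∈ Ioo (0 : ℝ) 1,
      HasDerivAt (fun u : ℝ => (phiFn u (zetaPt u)).im)
        (Real.log (‖1 + zetaPt t‖ / ‖1 - zetaPt t‖)) t ∧
      0 < Real.log (‖1 + zetaPt t‖ / ‖1 - zetaPt t‖) := by
    rintro t ⟨ht₀, ht₁⟩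
    have ht : t ^ 2 < 1 := by nlinarith
    refine ⟨hasDerivAt_im_phiFn_zetaPt ht ht₀.ne', Real.log_pos ?_⟩
    have hζ₁ : zetaPt t ≠ 1 := fun h ↦ (zetaPt_re_lt_one ht₀.ne').ne (by rw [h, one_re])
    exact (one_lt_div (norm_pos_iff.2 (sub_ne_zero.2 hζ₁.symm))).2
      (norm_one_sub_lt_norm_one_add (zetaPt_re_pos ht))
  refine ⟨hderiv, strictMonoOn_of_hasDerivWithinAt_pos (convex_Ioo 0 1)
    (f' := fun t ↦ Real.log (‖1 + zetaPt t‖ / ‖1 - zetaPt t‖)) ?_ ?_ ?_⟩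
  · exact fun t ht ↦ (hderiv t ht).1.continuousAt.continuousWithinAt
  · rw [interior_Ioo]
    exact fun t ht ↦ (hderiv t ht).1.hasDerivWithinAt
  · rw [interior_Ioo]
    exact fun t ht ↦ (hderiv t ht).2
end
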